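/- There is a constant C > 0 such that for every irrational x ∈ (0,1) and r ≥ 1, |B_{1,finite}(p_r/q_r) - Σ_{j=0}^{r-1} β_{j-1}(x) log(1/G^j(x))| ≤ C·G^r(x)/q_r(x), where B_{1,finite}(p/q) is the finite Brjuno sum of the rational p_r/q_r (the sum over its finite continued fraction expansion) and p_r/q_r is the r-th convergent of x. One may take C = 2·Σ_{j≥0} g^j with g = (√5-1)/2. -/

import Mathlib

/-!
Let `εⱼ(y) = (-1)^(j+1) (q_{j-1} y - p_{j-1})`, built from the convergents of `x`. At `y = x`
these are the products `β_{j-1}(x)`; at the convergent `y = p_r/q_r` they satisfy the same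
recurrence `ε_{j+2} = ε_j - a_{j+1} ε_{j+1}` with `ε_{r+1}(y) = 0`, so they are again the products
`β_{j-1}(y)` for `j < r`, and `Gʲ(y) = ε_{j+1}(y)/ε_j(y)` (at the last step possibly as
`Int.fract 1 = 0`, which `log (1/·)` does not see). Both sums are therefore
`∑ εⱼ log (εⱼ/ε_{j+1})`. Since `εⱼ` is affine in `y` with slope `±q_{j-1}`, and `εⱼ qⱼ ∈ [1/2, 1]`
in both cases, the `j`-th terms differ by at most `5 q_{j+1} |y - x|`. Summing with
`∑_{j<r} q_{j+1} ≤ 3 q_r` and using `|y - x| q_r² ≤ Gʳ(x)` gives the bound with `C = 15`.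
-/

open Finset Filter

noncomputable def gaussMap (x : ℝ) : ℝ := Int.fract (1 / x)

/-- `betaP x n` is β_{n-1}(x) = ∏_{i=0}^{n-1} Gⁱ(x), with `betaP x 0 = 1`. -/
noncomputable def betaP (x : ℝ) (n : ℕ) : ℝ := ∏ i ∈ Finset.range n, gaussMap^[i] x

/-- the (n+1)-st partial quotient a_{n+1} = ⌊1/Gⁿ(x)⌋ of the regular continued fraction. -/
noncomputable def cfDigit (x : ℝ) (n : ℕ) : ℤ := ⌊1 / gaussMap^[n] x⌋

/-- `convAux x n = ((pₙ, qₙ), (pₙ₋₁, qₙ₋₁))`, the convergents of the regular continued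
fraction of `x`, with `p₋₁ = 1, q₋₁ = 0, p₀ = 0, q₀ = 1`. -/
noncomputable def convAux (x : ℝ) : ℕ → (ℤ × ℤ) × (ℤ × ℤ)
  | 0 => ((0, 1), (1, 0))
  | n + 1 =>
      ((cfDigit x n * (convAux x n).1.1 + (convAux x n).2.1,
        cfDigit x n * (convAux x n).1.2 + (convAux x n).2.2),
       (convAux x n).1)

/-- numerator pₙ of the n-th principal convergent of `x`. -/
noncomputable def pConv (x : ℝ) (n : ℕ) : ℤ := (convAux x n).1.1

/-- denominator qₙ of the n-th principal convergent of `x`. -/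
noncomputable def qConv (x : ℝ) (n : ℕ) : ℤ := (convAux x n).1.2

/-- truncated Brjuno sum of length `r`. -/
noncomputable def brjunoFinite (y : ℝ) (r : ℕ) : ℝ :=
  ∑ j ∈ Finset.range r, betaP y j * Real.log (1 / gaussMap^[j] y)

noncomputable def pPrev (x : ℝ) (n : ℕ) : ℤ := (convAux x n).2.1

noncomputable def qPrev (x : ℝ) (n : ℕ) : ℤ := (convAux x n).2.2

section Convergents

variable (x : ℝ) (n : ℕ)

@[simp] lemma pConv_zero : pConv x 0 = 0 := rfl
@[simp] lemma qConv_zero : qConv x 0 = 1 := rfl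
@[simp] lemma pPrev_zero : pPrev x 0 = 1 := rfl
@[simp] lemma qPrev_zero : qPrev x 0 = 0 := rfl

lemma pConv_succ : pConv x (n + 1) = cfDigit x n * pConv x n + pPrev x n := rfl
lemma qConv_succ : qConv x (n + 1) = cfDigit x n * qConv x n + qPrev x n := rfl
@[simp] lemma pPrev_succ : pPrev x (n + 1) = pConv x n := rfl
@[simp] lemma qPrev_succ : qPrev x (n + 1) = qConv x n := rfl

lemma pConv_mul_qPrev_sub_pPrev_mul_qConv :
    pConv x n * qPrev x n - pPrev x n * qConv x n = (-1) ^ (n + 1) := by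
  induction n with
  | zero => simp
  | succ n ih =>
    rw [pConv_succ, qConv_succ, pPrev_succ, qPrev_succ, pow_succ, ← ih]
    ring

noncomputable def convError (x y : ℝ) (j : ℕ) : ℝ :=
  (-1) ^ (j + 1) * ((qPrev x j : ℝ) * y - pPrev x j)

variable (y y' : ℝ) (j : ℕ)

@[simp] lemma convError_zero : convError x y 0 = 1 := by simp [convError]

lemma convError_succ :
    convError x y (j + 1) = (-1) ^ j * ((qConv x j : ℝ) * y - pConv x j) := by
  rw [convError, pPrev_succ, qPrev_succ, pow_succ, pow_succ]
  ring

lemma convError_add_two :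
    convError x y (j + 2) = convError x y j - cfDigit x j * convError x y (j + 1) := by
  rw [convError_succ, convError_succ, convError, pConv_succ, qConv_succ, pow_succ]
  push_cast
  ring

lemma convError_mul_qConv_add :
    convError x y j * qConv x j + convError x y (j + 1) * qPrev x j = 1 := by
  have hdet : (pConv x j * qPrev x j - pPrev x j * qConv x j : ℝ) = (-1) ^ (j + 1) := by
    exact_mod_cast pConv_mul_qPrev_sub_pPrev_mul_qConv x j
  have hsq : ((-1 : ℝ) ^ j) ^ 2 = 1 := by rw [← pow_mul, pow_mul']; norm_num
  rw [convError, convError_succ]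
  linear_combination (-1 : ℝ) ^ (j + 1) * hdet + hsq

lemma abs_convError_sub_convError :
    |convError x y j - convError x y' j| = |(qPrev x j : ℝ)| * |y - y'| := by
  rw [convError, convError, ← mul_sub, sub_sub_sub_cancel_right, ← mul_sub, abs_mul, abs_mul]
  simp

lemma abs_convError_mul_sub_convError_mul :
    |convError x y' (j + 1) * convError x y j - convError x y (j + 1) * convError x y' j|
      = |y - y'| := by
  have hdet : (pConv x j * qPrev x j - pPrev x j * qConv x j : ℝ) = (-1) ^ (j + 1) := by
    exact_mod_cast pConv_mul_qPrev_sub_pPrev_mul_qConv x j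
  have hsq : ((-1 : ℝ) ^ j) ^ 2 = 1 := by rw [← pow_mul, pow_mul']; norm_num
  have hcross : convError x y' (j + 1) * convError x y j - convError x y (j + 1) * convError x y' j
      = (-1) ^ j * (y' - y) := by
    rw [convError_succ, convError_succ, convError, convError]
    linear_combination ((-1 : ℝ) ^ (j + 1) * (-1) ^ j * (y' - y)) * hdet
      + ((-1 : ℝ) ^ j * (y' - y)) * hsq
  rw [hcross, abs_mul, abs_pow, abs_neg, abs_one, one_pow, one_mul, abs_sub_comm]

lemma convError_one : convError x y 1 = y := by
  simp [convError_succ]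

end Convergents

noncomputable def convergent (x : ℝ) (r : ℕ) : ℝ := (pConv x r : ℝ) / qConv x r

lemma one_le_cfDigit {x : ℝ} {n : ℕ} (h : gaussMap^[n] x ∈ Set.Ioo 0 1) : 1 ≤ cfDigit x n := by
  rw [cfDigit, Int.le_floor, Int.cast_one, le_div_iff₀ h.1, one_mul]
  exact h.2.le

lemma gaussMap_iterate_succ (x : ℝ) (n : ℕ) :
    gaussMap^[n + 1] x = 1 / gaussMap^[n] x - cfDigit x n := by
  rw [Function.iterate_succ_apply', gaussMap, Int.fract, cfDigit]

lemma Irrational.gaussMap_iterate {x : ℝ} (hx : Irrational x) (n : ℕ) :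
    Irrational (gaussMap^[n] x) := by
  induction n with
  | zero => exact hx
  | succ n ih =>
    rw [gaussMap_iterate_succ, one_div]
    exact ih.inv.sub_intCast _

lemma Irrational.gaussMap_iterate_mem_Ioo {x : ℝ} (hx : Irrational x) (h0 : 0 < x) (h1 : x < 1) :
    ∀ n, gaussMap^[n] x ∈ Set.Ioo 0 1
  | 0 => ⟨h0, h1⟩
  | n + 1 => by
    have hne := (hx.gaussMap_iterate (n + 1)).ne_zero
    rw [Function.iterate_succ_apply'] at hne ⊢
    exact ⟨(Int.fract_nonneg _).lt_of_ne' hne, Int.fract_lt_one _⟩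

lemma betaP_succ (x : ℝ) (n : ℕ) : betaP x (n + 1) = betaP x n * gaussMap^[n] x :=
  prod_range_succ _ _

lemma log_one_div_fract {t : ℝ} (ht0 : 0 < t) (ht1 : t ≤ 1) :
    Real.log (1 / Int.fract t) = Real.log (1 / t) := by
  rcases ht1.lt_or_eq with ht1 | rfl
  · rw [Int.fract_eq_self.mpr ⟨ht0.le, ht1⟩]
  · simp -- both sides vanish: `Int.fract 1 = 0` and `Real.log 0 = 0`

lemma abs_log_sub_log_le {a b c : ℝ} (hc : 0 < c) (ha : c ≤ a) (hb : c ≤ b) :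
    |Real.log a - Real.log b| ≤ |a - b| / c := by
  have key : ∀ {u v : ℝ}, c ≤ u → c ≤ v → Real.log u - Real.log v ≤ |u - v| / c := by
    intro u v hu hv
    have hu0 : 0 < u := hc.trans_le hu
    have hv0 : 0 < v := hc.trans_le hv
    calc Real.log u - Real.log v = Real.log (u / v) := (Real.log_div hu0.ne' hv0.ne').symm
      _ ≤ u / v - 1 := Real.log_le_sub_one_of_pos (div_pos hu0 hv0)
      _ = (u - v) / v := by field_simp
      _ ≤ |u - v| / v := by gcongr; exact le_abs_self _
      _ ≤ |u - v| / c := by gcongr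
  rw [abs_sub_le_iff]
  exact ⟨key ha hb, abs_sub_comm a b ▸ key hb ha⟩

lemma mul_abs_log_div_sub_log_div_le {E E' B B' Q : ℝ} (hE' : 0 < E') (hB : 0 < B)
    (hB' : 0 < B') (hQ : 0 < Q) (hBE : B ≤ 2 * E) (hE'Q : 1 ≤ 2 * (E' * Q))
    (hB'Q : 1 ≤ 2 * (B' * Q)) :
    B * |Real.log (E / E') - Real.log (B / B')| ≤ 4 * Q * |B' * E - E' * B| := by
  have hE : 0 < E := by linarith
  have hc : 0 < B / (4 * Q) := by positivity
  have hlog : Real.log (E / E') - Real.log (B / B') = Real.log (B' * E) - Real.log (E' * B) := by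
    rw [Real.log_div hE.ne' hE'.ne', Real.log_div hB.ne' hB'.ne', Real.log_mul hB'.ne' hE.ne',
      Real.log_mul hE'.ne' hB.ne']
    ring
  have h1 : B / (4 * Q) ≤ B' * E := by
    rw [div_le_iff₀ (by positivity)]
    nlinarith [mul_le_mul_of_nonneg_left hBE (mul_pos hB' hQ).le]
  have h2 : B / (4 * Q) ≤ E' * B := by
    rw [div_le_iff₀ (by positivity)]
    nlinarith
  calc B * |Real.log (E / E') - Real.log (B / B')|
      ≤ B * (|B' * E - E' * B| / (B / (4 * Q))) := by
        rw [hlog]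
        gcongr
        exact abs_log_sub_log_le hc h1 h2
    _ = 4 * Q * |B' * E - E' * B| := by field_simp

section PositiveDigits

variable {x : ℝ} (ha : ∀ n, 1 ≤ cfDigit x n)
include ha

lemma qPrev_nonneg_and_one_le_qConv (n : ℕ) : 0 ≤ qPrev x n ∧ 1 ≤ qConv x n := by
  induction n with
  | zero => simp
  | succ n ih =>
    rw [qPrev_succ, qConv_succ]
    exact ⟨by linarith, by nlinarith [ha n]⟩

lemma qPrev_nonneg (n : ℕ) : 0 ≤ qPrev x n := (qPrev_nonneg_and_one_le_qConv ha n).1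

lemma one_le_qConv (n : ℕ) : 1 ≤ qConv x n := (qPrev_nonneg_and_one_le_qConv ha n).2

lemma qConv_pos (n : ℕ) : (0 : ℝ) < qConv x n := by
  exact_mod_cast (one_le_qConv ha n).trans_lt' one_pos

lemma qConv_add_qPrev_le (n : ℕ) : qConv x n + qPrev x n ≤ qConv x (n + 1) := by
  rw [qConv_succ]
  nlinarith [ha n, one_le_qConv ha n]

lemma qPrev_le_qConv : ∀ n, qPrev x n ≤ qConv x n
  | 0 => zero_le_one
  | n + 1 => by linarith [qConv_add_qPrev_le ha n, qPrev_nonneg ha n, qPrev_succ x n]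

lemma two_mul_qPrev_le_qConv_succ (n : ℕ) : 2 * qPrev x n ≤ qConv x (n + 1) := by
  linarith [qConv_add_qPrev_le ha n, qPrev_le_qConv ha n]

lemma qPrev_mul_cfDigit_le_qConv_succ (n : ℕ) : qPrev x n * cfDigit x n ≤ qConv x (n + 1) := by
  rw [qConv_succ]
  nlinarith [ha n, qPrev_le_qConv ha n, qPrev_nonneg ha n]

lemma sum_qConv_succ_le_three_mul (r : ℕ) :
    ∑ j ∈ range r, qConv x (j + 1) ≤ 3 * qConv x r := by
  suffices h : ∀ r, ∑ j ∈ range r, qConv x (j + 1) ≤ 2 * qConv x r + qPrev x r by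
    linarith [h r, qPrev_le_qConv ha r]
  intro r
  induction r with
  | zero => simp
  | succ r ih =>
    rw [sum_range_succ, qPrev_succ]
    linarith [qConv_add_qPrev_le ha r]

lemma convError_mul_qConv_mem_Icc {y : ℝ} {j : ℕ} (h0 : 0 ≤ convError x y (j + 1))
    (h1 : convError x y (j + 1) * qConv x (j + 1) ≤ 1) :
    convError x y j * qConv x j ∈ Set.Icc (1 / 2 : ℝ) 1 := by
  have hid := convError_mul_qConv_add x y j
  have hqPrev : (0 : ℝ) ≤ qPrev x j := by exact_mod_cast qPrev_nonneg ha j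
  have hqPrev_le : 2 * (qPrev x j : ℝ) ≤ qConv x (j + 1) := by
    exact_mod_cast two_mul_qPrev_le_qConv_succ ha j
  constructor <;> nlinarith [mul_le_mul_of_nonneg_left hqPrev_le h0]

variable {r j : ℕ}

lemma convError_convergent_succ_self : convError x (convergent x r) (r + 1) = 0 := by
  rw [convError_succ, convergent, mul_div_cancel₀ _ (qConv_pos ha r).ne', sub_self, mul_zero]

lemma convError_convergent_mul_qConv_mem_Icc (hj : j ≤ r) :
    convError x (convergent x r) j * qConv x j ∈ Set.Icc (1 / 2 : ℝ) 1 := by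
  induction hj using Nat.decreasingInduction with
  | self =>
    apply convError_mul_qConv_mem_Icc ha <;> simp [convError_convergent_succ_self ha]
  | of_succ k _ ih =>
    have hpos : 0 ≤ convError x (convergent x r) (k + 1) :=
      nonneg_of_mul_nonneg_left (by linarith [ih.1]) (qConv_pos ha (k + 1))
    exact convError_mul_qConv_mem_Icc ha hpos ih.2

lemma convError_convergent_pos (hj : j ≤ r) : 0 < convError x (convergent x r) j :=
  pos_of_mul_pos_left (by linarith [(convError_convergent_mul_qConv_mem_Icc ha hj).1])
    (qConv_pos ha j).le

lemma convError_convergent_nonneg (hj : j ≤ r + 1) : 0 ≤ convError x (convergent x r) j := by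
  rcases hj.lt_or_eq with hj | rfl
  · exact (convError_convergent_pos ha (Nat.lt_succ_iff.mp hj)).le
  · exact (convError_convergent_succ_self ha).ge

lemma convError_convergent_succ_le (hj : j ≤ r) :
    convError x (convergent x r) (j + 1) ≤ convError x (convergent x r) j := by
  rcases hj.lt_or_eq with hj | rfl
  · have hrec := convError_add_two x (convergent x r) j
    have h2 := convError_convergent_nonneg ha (r := r) (j := j + 2) (by omega)
    have h1 := convError_convergent_pos ha (j := j + 1) hj
    have haj : (1 : ℝ) ≤ cfDigit x j := by exact_mod_cast ha j
    nlinarith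
  · rw [convError_convergent_succ_self ha]
    exact convError_convergent_nonneg ha (by omega)

lemma convError_convergent_succ_lt (hj : j + 2 ≤ r) :
    convError x (convergent x r) (j + 1) < convError x (convergent x r) j := by
  have hrec := convError_add_two x (convergent x r) j
  have h2 := convError_convergent_pos ha hj
  have h1 := convError_convergent_pos ha (r := r) (j := j + 1) (by omega)
  have haj : (1 : ℝ) ≤ cfDigit x j := by exact_mod_cast ha j
  nlinarith

lemma convError_convergent_le_cfDigit_add_one_mul (hj : j + 1 ≤ r) :
    convError x (convergent x r) j
      ≤ (cfDigit x j + 1) * convError x (convergent x r) (j + 1) := by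
  linarith [convError_add_two x (convergent x r) j, convError_convergent_succ_le ha hj]

lemma gaussMap_div_convError_convergent (hj : j + 1 ≤ r) :
    gaussMap (convError x (convergent x r) (j + 1) / convError x (convergent x r) j)
      = Int.fract
          (convError x (convergent x r) (j + 2) / convError x (convergent x r) (j + 1)) := by
  set e := convError x (convergent x r)
  have h1 : e (j + 1) ≠ 0 := (convError_convergent_pos ha hj).ne'
  have hsplit : e j / e (j + 1) = cfDigit x j + e (j + 2) / e (j + 1) := by
    rw [show e (j + 2) = _ from convError_add_two x (convergent x r) j]
    field_simp
    ring
  rw [gaussMap, one_div_div, hsplit, Int.fract_intCast_add]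

lemma gaussMap_iterate_convergent (hj : j + 1 < r) :
    gaussMap^[j] (convergent x r)
      = convError x (convergent x r) (j + 1) / convError x (convergent x r) j := by
  induction j with
  | zero => simp [convError_one]
  | succ j ih =>
    have hpos := convError_convergent_pos ha (r := r) (j := j + 1) (by omega)
    rw [Function.iterate_succ_apply', ih (by omega),
      gaussMap_div_convError_convergent ha (by omega), Int.fract_eq_self]
    exact ⟨div_nonneg (convError_convergent_pos ha (by omega)).le hpos.le,
      (div_lt_one hpos).mpr (convError_convergent_succ_lt ha (by omega))⟩

lemma log_div_convError_convergent_mem_Icc (hj : j + 1 ≤ r) :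
    Real.log (convError x (convergent x r) j / convError x (convergent x r) (j + 1))
      ∈ Set.Icc 0 (cfDigit x j : ℝ) := by
  have hE' := convError_convergent_pos ha hj
  have hle := convError_convergent_succ_le ha (r := r) (j := j) (by omega)
  constructor
  · exact Real.log_nonneg ((one_le_div hE').mpr hle)
  · have hratio := (div_le_iff₀ hE').mpr (convError_convergent_le_cfDigit_add_one_mul ha hj)
    linarith [Real.log_le_sub_one_of_pos (div_pos (hE'.trans_le hle) hE')]

lemma betaP_convergent (hj : j < r) :
    betaP (convergent x r) j = convError x (convergent x r) j := by
  induction j with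
  | zero => simp [betaP]
  | succ j ih =>
    rw [betaP, prod_range_succ, ← betaP, ih (by omega), gaussMap_iterate_convergent ha hj,
      mul_div_cancel₀ _ (convError_convergent_pos ha (by omega)).ne']

lemma log_one_div_gaussMap_iterate_convergent (hj : j < r) :
    Real.log (1 / gaussMap^[j] (convergent x r))
      = Real.log (convError x (convergent x r) j / convError x (convergent x r) (j + 1)) := by
  rcases Nat.lt_or_ge (j + 1) r with hj' | hj'
  · rw [gaussMap_iterate_convergent ha hj', one_div_div]
  obtain _ | k := j
  · simp [convError_one]
  have hpos := convError_convergent_pos ha (r := r) (j := k + 1) (by omega)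
  rw [Function.iterate_succ_apply', gaussMap_iterate_convergent ha (by omega),
    gaussMap_div_convError_convergent ha (by omega), log_one_div_fract, one_div_div]
  · exact div_pos (convError_convergent_pos ha (by omega)) hpos
  · exact (div_le_one hpos).mpr (convError_convergent_succ_le ha (by omega))

end PositiveDigits

section GaussOrbitInIoo

variable {x : ℝ} (hG : ∀ n, gaussMap^[n] x ∈ Set.Ioo 0 1) {r j : ℕ}
include hG

lemma betaP_pos (n : ℕ) : 0 < betaP x n :=
  prod_pos fun i _ => (hG i).1

lemma betaP_div_betaP_succ (n : ℕ) : betaP x n / betaP x (n + 1) = 1 / gaussMap^[n] x := by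
  rw [betaP_succ, div_mul_cancel_left₀ (betaP_pos hG n).ne', one_div]

lemma betaP_eq_convError (n : ℕ) : betaP x n = convError x x n := by
  induction n using Nat.twoStepInduction with
  | zero => simp [betaP]
  | one => simp [betaP, convError_one]
  | more n ih ih' =>
    rw [convError_add_two, ← ih, ← ih', betaP_succ, gaussMap_iterate_succ, betaP_succ]
    field_simp [(hG n).1.ne']

lemma convError_self_pos (n : ℕ) : 0 < convError x x n :=
  betaP_eq_convError hG n ▸ betaP_pos hG n

lemma convError_self_succ (n : ℕ) :
    convError x x (n + 1) = convError x x n * gaussMap^[n] x := by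
  rw [← betaP_eq_convError hG, ← betaP_eq_convError hG, betaP_succ]

lemma convError_self_mul_qConv_mem_Icc (n : ℕ) :
    convError x x n * qConv x n ∈ Set.Icc (1 / 2 : ℝ) 1 := by
  have ha n := one_le_cfDigit (hG n)
  have hle : ∀ n, convError x x n * qConv x n ≤ 1 := fun n => by
    have hqPrev : (0 : ℝ) ≤ qPrev x n := by exact_mod_cast qPrev_nonneg ha n
    nlinarith [convError_mul_qConv_add x x n, convError_self_pos hG (n + 1)]
  exact convError_mul_qConv_mem_Icc ha (convError_self_pos hG (n + 1)).le (hle (n + 1))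

lemma abs_convergent_sub_mul_qConv_sq_le (r : ℕ) :
    |convergent x r - x| * qConv x r ^ 2 ≤ gaussMap^[r] x := by
  have ha n := one_le_cfDigit (hG n)
  have hq : (0 : ℝ) ≤ qConv x r := (qConv_pos ha r).le
  have hdist := abs_convError_sub_convError x (convergent x r) x (r + 1)
  rw [convError_convergent_succ_self ha, zero_sub, abs_neg, abs_of_pos (convError_self_pos hG _),
    qPrev_succ, abs_of_nonneg hq, convError_self_succ hG] at hdist
  have hbq := (convError_self_mul_qConv_mem_Icc hG r).2
  calc |convergent x r - x| * qConv x r ^ 2 = convError x x r * qConv x r * gaussMap^[r] x := by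
        linear_combination (-(qConv x r : ℝ)) * hdist
    _ ≤ gaussMap^[r] x := mul_le_of_le_one_left (hG r).1.le hbq

lemma abs_convError_mul_log_sub_le (hj : j + 1 ≤ r) :
    |convError x (convergent x r) j *
          Real.log (convError x (convergent x r) j / convError x (convergent x r) (j + 1))
        - convError x x j * Real.log (convError x x j / convError x x (j + 1))|
      ≤ 5 * qConv x (j + 1) * |convergent x r - x| := by
  have ha n := one_le_cfDigit (hG n)
  set E := convError x (convergent x r) j
  set E' := convError x (convergent x r) (j + 1)
  set B := convError x x j
  set B' := convError x x (j + 1)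
  have hE' : 0 < E' := convError_convergent_pos ha hj
  have hB : 0 < B := convError_self_pos hG j
  have hB' : 0 < B' := convError_self_pos hG (j + 1)
  have hq := qConv_pos ha j
  have hEq := (convError_convergent_mul_qConv_mem_Icc ha (r := r) (j := j) (by omega)).1
  have hE'q := (convError_convergent_mul_qConv_mem_Icc ha hj).1
  have hBq := (convError_self_mul_qConv_mem_Icc hG j).2
  have hB'q := (convError_self_mul_qConv_mem_Icc hG (j + 1)).1
  have hBE : B ≤ 2 * E := le_of_mul_le_mul_right (by linarith) hq
  obtain ⟨hlog_nonneg, hlog_le⟩ := log_div_convError_convergent_mem_Icc ha hj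
  have hfirst : |E - B| * Real.log (E / E') ≤ qConv x (j + 1) * |convergent x r - x| := by
    have hqPrev : (0 : ℝ) ≤ qPrev x j := by exact_mod_cast qPrev_nonneg ha j
    have hqa : (qPrev x j * cfDigit x j : ℝ) ≤ qConv x (j + 1) := by
      exact_mod_cast qPrev_mul_cfDigit_le_qConv_succ ha j
    rw [abs_convError_sub_convError, abs_of_nonneg hqPrev, mul_right_comm]
    exact mul_le_mul_of_nonneg_right ((mul_le_mul_of_nonneg_left hlog_le hqPrev).trans hqa)
      (abs_nonneg _)
  have hsecond := mul_abs_log_div_sub_log_div_le hE' hB hB' (qConv_pos ha (j + 1)) hBE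
    (by linarith) (by linarith)
  rw [abs_convError_mul_sub_convError_mul] at hsecond
  calc |E * Real.log (E / E') - B * Real.log (B / B')|
      = |(E - B) * Real.log (E / E') + B * (Real.log (E / E') - Real.log (B / B'))| := by ring_nf
    _ ≤ |E - B| * Real.log (E / E') + B * |Real.log (E / E') - Real.log (B / B')| := by
        refine (abs_add_le _ _).trans_eq ?_
        rw [abs_mul, abs_mul, abs_of_nonneg hlog_nonneg, abs_of_pos hB]
    _ ≤ 5 * qConv x (j + 1) * |convergent x r - x| := by linarith

lemma brjunoFinite_convergent_sub_eq (r : ℕ) :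
    brjunoFinite (convergent x r) r - ∑ j ∈ range r, betaP x j * Real.log (1 / gaussMap^[j] x)
      = ∑ j ∈ range r, (convError x (convergent x r) j *
          Real.log (convError x (convergent x r) j / convError x (convergent x r) (j + 1))
        - convError x x j * Real.log (convError x x j / convError x x (j + 1))) := by
  have ha n := one_le_cfDigit (hG n)
  rw [brjunoFinite, ← sum_sub_distrib]
  refine sum_congr rfl fun j hj => ?_
  rw [mem_range] at hj
  rw [betaP_convergent ha hj, log_one_div_gaussMap_iterate_convergent ha hj,
    ← betaP_div_betaP_succ hG, betaP_eq_convError hG, betaP_eq_convError hG]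

end GaussOrbitInIoo

theorem truncated_brjuno_near_convergent :
    ∃ C : ℝ, 0 < C ∧ ∀ x : ℝ, Irrational x → 0 < x → x < 1 → ∀ r : ℕ, 1 ≤ r →
      |brjunoFinite ((pConv x r : ℝ) / (qConv x r : ℝ)) r
          - ∑ j ∈ Finset.range r, betaP x j * Real.log (1 / gaussMap^[j] x)|
        ≤ C * gaussMap^[r] x / (qConv x r : ℝ) := by
  refine ⟨15, by norm_num, fun x hx h0 h1 r _ => ?_⟩
  have hG := hx.gaussMap_iterate_mem_Ioo h0 h1
  have ha n := one_le_cfDigit (hG n)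
  have hsum : ∑ j ∈ range r, (qConv x (j + 1) : ℝ) ≤ 3 * qConv x r := by
    exact_mod_cast sum_qConv_succ_le_three_mul ha r
  have hq := qConv_pos ha r
  rw [le_div_iff₀ hq, ← convergent, brjunoFinite_convergent_sub_eq hG]
  calc _ ≤ (∑ j ∈ range r, 5 * qConv x (j + 1) * |convergent x r - x|) * qConv x r := by
        refine mul_le_mul_of_nonneg_right ((abs_sum_le_sum_abs _ _).trans ?_) hq.le
        exact sum_le_sum fun j hj => abs_convError_mul_log_sub_le hG (mem_range.mp hj)
    _ = 5 * (∑ j ∈ range r, (qConv x (j + 1) : ℝ)) * |convergent x r - x| * qConv x r := by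
        rw [← sum_mul, ← mul_sum]
    _ ≤ 5 * (3 * qConv x r) * |convergent x r - x| * qConv x r := by gcongr
    _ = 15 * (|convergent x r - x| * qConv x r ^ 2) := by ring
    _ ≤ 15 * gaussMap^[r] x := by gcongr; exact abs_convergent_sub_mul_qConv_sq_le hG r
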